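/- Let σ be a deviation-compatible ranking generator for context γ. For every knowledge formula φ (built from primitive propositions by Boolean connectives, temporal operators, and knowledge operators K_i), every protocol P, every point (r,m) with r ∈ R(P,γ), and every order assignment ≪: (I(P,γ,π), r, m) ⊨ φ if and only if (I⁺(γ,π), ≪, σ(P), r, m) ⊨ φ^B, where φ^B replaces every K_i in φ by B_i. -/

import Mathlib

/-! At a point of a run of `P`, the minimal rank of runs through the agent's local state is `0`,
so `B_i` ranges over the rank-`0` runs, which are exactly the runs of `P`: the same runs over
which `K_i` ranges in `I(P,γ,π)`. The translation then commutes with every connective. -/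

/-- Formulas of the knowledge language `L_K`: primitive propositions, Boolean
connectives, temporal operators `◯` and `◇`, and knowledge operators `K_i`. -/
inductive Fml (PV Agent : Type) : Type
  | prim : PV → Fml PV Agent
  | neg : Fml PV Agent → Fml PV Agent
  | conj : Fml PV Agent → Fml PV Agent → Fml PV Agent
  | next : Fml PV Agent → Fml PV Agent
  | ev : Fml PV Agent → Fml PV Agent
  | know : Agent → Fml PV Agent → Fml PV Agent

/-- Knowledge semantics of `L_K` in the interpreted system over run set `S`. -/
def satK {GState PV Agent LState : Type}
    (loc : GState → Agent → LState) (π : PV → GState → Prop)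
    (S : Set (ℕ → GState)) :
    Fml PV Agent → (ℕ → GState) → ℕ → Prop
  | .prim p, r, m => π p (r m)
  | .neg φ, r, m => ¬ satK loc π S φ r m
  | .conj φ ψ, r, m => satK loc π S φ r m ∧ satK loc π S ψ r m
  | .next φ, r, m => satK loc π S φ r (m + 1)
  | .ev φ, r, m => ∃ m', m ≤ m' ∧ satK loc π S φ r m'
  | .know i φ, r, m =>
      ∀ r' ∈ S, ∀ m', loc (r' m') i = loc (r m) i → satK loc π S φ r' m'

/-- `min_i^κ(r,m)`: minimal rank of runs containing `i`'s local state. -/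
noncomputable def minRank {GState Agent LState : Type}
    (Rset : Set (ℕ → GState)) (loc : GState → Agent → LState)
    (κ : (ℕ → GState) → ℕ∞) (i : Agent) (r : ℕ → GState) (m : ℕ) : ℕ∞ :=
  sInf {k | ∃ r' ∈ Rset, (∃ m', loc (r' m') i = loc (r m) i) ∧ κ r' = k}

/-- Belief semantics of `φ^B` in the extended system `(I⁺(γ,π), ≪, κ)`:
identical to `satK` except that each `K_i` is read as the belief operator
`B_i` determined by the ranking `κ` over the full run set `Rplus`. -/
def satB {GState PV Agent LState : Type}
    (loc : GState → Agent → LState) (π : PV → GState → Prop)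
    (Rplus : Set (ℕ → GState)) (κ : (ℕ → GState) → ℕ∞) :
    Fml PV Agent → (ℕ → GState) → ℕ → Prop
  | .prim p, r, m => π p (r m)
  | .neg φ, r, m => ¬ satB loc π Rplus κ φ r m
  | .conj φ ψ, r, m => satB loc π Rplus κ φ r m ∧ satB loc π Rplus κ ψ r m
  | .next φ, r, m => satB loc π Rplus κ φ r (m + 1)
  | .ev φ, r, m => ∃ m', m ≤ m' ∧ satB loc π Rplus κ φ r m'
  | .know i φ, r, m =>
      ∀ r' ∈ Rplus, ∀ m', loc (r' m') i = loc (r m) i →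
        κ r' = minRank Rplus loc κ i r m → satB loc π Rplus κ φ r' m'

section Translation

variable {GState PV Agent LState : Type} {loc : GState → Agent → LState}
  {π : PV → GState → Prop} {RP Rplus : Set (ℕ → GState)} {κ : (ℕ → GState) → ℕ∞}

theorem minRank_eq_zero_of_rank_eq_zero {i : Agent} {r : ℕ → GState} {m : ℕ}
    (hr : r ∈ Rplus) (h0 : κ r = 0) : minRank Rplus loc κ i r m = 0 :=
  nonpos_iff_eq_zero.mp (sInf_le ⟨r, hr, ⟨m, rfl⟩, h0⟩)

theorem satB_know_iff_of_mem (hsub : RP ⊆ Rplus) (hcompat : ∀ r ∈ Rplus, (κ r = 0 ↔ r ∈ RP))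
    {i : Agent} {φ : Fml PV Agent} {r : ℕ → GState} {m : ℕ} (hr : r ∈ RP) :
    satB loc π Rplus κ (.know i φ) r m ↔
      ∀ r' ∈ RP, ∀ m', loc (r' m') i = loc (r m) i → satB loc π Rplus κ φ r' m' := by
  have hmin : minRank Rplus loc κ i r m = 0 :=
    minRank_eq_zero_of_rank_eq_zero (hsub hr) ((hcompat r (hsub hr)).mpr hr)
  simp only [satB, hmin]
  constructor
  · intro h r' hr' m' hloc
    exact h r' (hsub hr') m' hloc ((hcompat r' (hsub hr')).mpr hr')
  · intro h r' hr' m' hloc hκ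
    exact h r' ((hcompat r' hr').mp hκ) m' hloc

end Translation

theorem stmt5_general {GState PV Agent LState : Type}
    (loc : GState → Agent → LState) (π : PV → GState → Prop)
    (RP Rplus : Set (ℕ → GState)) (hsub : RP ⊆ Rplus)
    (κ : (ℕ → GState) → ℕ∞)
    (hcompat : ∀ r ∈ Rplus, (κ r = 0 ↔ r ∈ RP)) :
    ∀ (φ : Fml PV Agent) (r : ℕ → GState) (m : ℕ), r ∈ RP →
      (satK loc π RP φ r m ↔ satB loc π Rplus κ φ r m) := by
  intro φ
  induction φ with
  | prim p => intro r m _; rfl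
  | neg φ ih => intro r m hr; exact not_congr (ih r m hr)
  | conj φ ψ ihφ ihψ => intro r m hr; exact and_congr (ihφ r m hr) (ihψ r m hr)
  | next φ ih => intro r m hr; exact ih r (m + 1) hr
  | ev φ ih =>
    intro r m hr
    exact exists_congr fun m' => and_congr_right fun _ => ih r m' hr
  | know i φ ih =>
    intro r m hr
    rw [satB_know_iff_of_mem hsub hcompat hr]
    exact forall₂_congr fun r' hr' => forall₂_congr fun m' _ => ih r' m' hr'

/-- translation theorem: if `κ = σ(P)` is `P`-compatible (rank 0
exactly on `R(P,γ) = RP ⊆ R⁺(γ) = Rplus`), then for every formula `φ ∈ L_K`,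
every point of a run of `P`, and every order assignment `ord`,
`(I(P,γ,π),r,m) ⊨ φ` iff `(I⁺(γ,π),≪,σ(P),r,m) ⊨ φ^B`. -/
theorem stmt5 {GState PV Agent LState : Type}
    (loc : GState → Agent → LState) (π : PV → GState → Prop)
    (RP Rplus : Set (ℕ → GState)) (hsub : RP ⊆ Rplus)
    (κ : (ℕ → GState) → ℕ∞)
    (hcompat : ∀ r ∈ Rplus, (κ r = 0 ↔ r ∈ RP))
    (ord : ((ℕ → GState) × ℕ) → ((ℕ → GState) × ℕ) → ((ℕ → GState) × ℕ) → Prop) :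
    ∀ (φ : Fml PV Agent) (r : ℕ → GState) (m : ℕ), r ∈ RP →
      (satK loc π RP φ r m ↔ satB loc π Rplus κ φ r m) :=
  stmt5_general loc π RP Rplus hsub κ hcompat
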